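/- There exists an L_WSO-formula φ_⊆(X_l, X_r, Y_l, Y_r) such that for all A, B ∈ P_fci(𝕀): A ⊆ B if and only if WSO(𝕀) ⊨ φ_⊆(l(A), r(A), l(B), r(B)). -/

import Mathlib

namespace MCpaper

open FirstOrder Language Structure Set

/-- `𝕀`: a dense linear order with a least element `0` and no greatest element,
concretely the nonnegative rationals. -/
abbrev II : Type := NNRat

/-! ### Set-level operations associated to a linear order -/

section SetOps

variable {α : Type*} [LinearOrder α]

/-- The singleton of the least element of `A` (as a set; empty if `A` has no least element). -/
def minSet (A : Set α) : Set α := {i ∈ A | ∀ j ∈ A, i ≤ j}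

/-- The singleton of the greatest element of `A` (as a set; empty if `A` has no greatest
element). -/
def maxSet (A : Set α) : Set α := {i ∈ A | ∀ j ∈ A, j ≤ i}

/-- `sInvSet A B = {i ∈ A : i has a successor in the suborder A and that successor lies in B}`. -/
def sInvSet (A B : Set α) : Set α :=
  {i ∈ A | ∃ j ∈ A, i < j ∧ (∀ k ∈ A, i < k → j ≤ k) ∧ j ∈ B}

lemma minSet_subset (A : Set α) : minSet A ⊆ A := sep_subset _ _

lemma minSet_subsingleton (A : Set α) : (minSet A).Subsingleton :=
  fun x hx y hy => le_antisymm (hx.2 y hy.1) (hy.2 x hx.1)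

lemma maxSet_subsingleton (A : Set α) : (maxSet A).Subsingleton :=
  fun x hx y hy => le_antisymm (hy.2 x hx.1) (hx.2 y hy.1)
lemma maxSet_subset (A : Set α) : maxSet A ⊆ A := sep_subset _ _
lemma sInvSet_subset (A B : Set α) : sInvSet A B ⊆ A := sep_subset _ _

end SetOps

/-! ### The languages -/

/-- Relation symbols of `L_MO = {⊆, ∃<}`. -/
inductive MORel : ℕ → Type
  | sub : MORel 2
  | elt : MORel 2

/-- The language `L_MO = {⊆, ∃<}` with two binary relation symbols. -/
def LMO : Language := ⟨fun _ => Empty, MORel⟩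

/-- Function symbols of `L_WSO`. -/
inductive WSOFunc : ℕ → Type
  | union : WSOFunc 2
  | inter : WSOFunc 2
  | bot : WSOFunc 0
  | zero : WSOFunc 0
  | min : WSOFunc 1
  | max : WSOFunc 1
  | sinv : WSOFunc 2

/-- The language `L_WSO = {∪, ∩, ⊥, 𝟎, min, max, 𝔰⁻¹}`. -/
def LWSO : Language := ⟨WSOFunc, fun _ => Empty⟩

/-- Function symbols of `L_MSOFin`. -/
inductive MSOFinFunc : ℕ → Type
  | union : MSOFinFunc 2
  | inter : MSOFinFunc 2
  | bot : MSOFinFunc 0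
  | zero : MSOFinFunc 0
  | zeroStar : MSOFinFunc 0
  | sinv : MSOFinFunc 1

/-- The language `L_MSOFin = {∪, ∩, ⊥, 𝟎, 𝟎*, s⁻¹}`. -/
def LMSOFin : Language := ⟨MSOFinFunc, fun _ => Empty⟩

/-- Function symbols of `L_L`. -/
inductive LLFunc : ℕ → Type
  | union : LLFunc 2
  | inter : LLFunc 2
  | bot : LLFunc 0
  | zero : LLFunc 0
  | min : LLFunc 1
  | max : LLFunc 1
  | left : LLFunc 1
  | right : LLFunc 1

/-- The language `L_L = {∪, ∩, ⊥, 𝟎, min, max, l, r}`. -/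
def LL : Language := ⟨LLFunc, fun _ => Empty⟩

/-! ### `WSO(𝕀)` as an `L_WSO`-structure and as an `L_MO`-structure -/

/-- The universe of `WSO(𝕀)`: finite subsets of `𝕀`. -/
abbrev FinSub : Type := {A : Set II // A.Finite}

/-- `WSO(𝕀)` as an `L_WSO`-structure. -/
instance finSubLWSO : LWSO.Structure FinSub where
  funMap {n} f :=
    match f with
    | .union => fun v => ⟨(v 0).1 ∪ (v 1).1, (v 0).2.union (v 1).2⟩
    | .inter => fun v => ⟨(v 0).1 ∩ (v 1).1, (v 0).2.inter_of_left _⟩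
    | .bot => fun _ => ⟨∅, finite_empty⟩
    | .zero => fun _ => ⟨{0}, finite_singleton _⟩
    | .min => fun v => ⟨minSet (v 0).1, (v 0).2.subset (minSet_subset _)⟩
    | .max => fun v => ⟨maxSet (v 0).1, (v 0).2.subset (maxSet_subset _)⟩
    | .sinv => fun v => ⟨sInvSet (v 0).1 (v 1).1, (v 0).2.subset (sInvSet_subset _ _)⟩
  RelMap {n} r := Empty.elim r

/-- `WSO(α)` as an `L_MO`-structure, for any linearly ordered `α` (here specialised to `𝕀`). -/
instance finSubLMO : LMO.Structure FinSub where
  funMap {n} f := Empty.elim f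
  RelMap {n} r :=
    match r with
    | .sub => fun v => (v 0).1 ⊆ (v 1).1
    | .elt => fun v => ∃ a ∈ (v 0).1, ∃ b ∈ (v 1).1, a < b

/-- `MSO(α)`: the `L_MO`-structure on the full powerset of a linear order `α`. -/
instance powersetLMO (α : Type*) [LinearOrder α] : LMO.Structure (Set α) where
  funMap {n} f := Empty.elim f
  RelMap {n} r :=
    match r with
    | .sub => fun v => v 0 ⊆ v 1
    | .elt => fun v => ∃ a ∈ v 0, ∃ b ∈ v 1, a < b

/-! ### `MSO(n)` and the pseudofinite theory `T_MSOFin` -/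

/-- `MSO(n)` as an `L_MSOFin`-structure on the powerset of `{0, …, n-1}`. -/
instance msoFinStructure (n : ℕ) : LMSOFin.Structure (Set (Fin n)) where
  funMap {m} f :=
    match f with
    | .union => fun v => v 0 ∪ v 1
    | .inter => fun v => v 0 ∩ v 1
    | .bot => fun _ => ∅
    | .zero => fun _ => {i : Fin n | (i : ℕ) = 0}
    | .zeroStar => fun _ => {i : Fin n | (i : ℕ) = n - 1}
    | .sinv => fun v => {i : Fin n | ∃ j : Fin n, (j : ℕ) = (i : ℕ) + 1 ∧ j ∈ v 0}
  RelMap {m} r := Empty.elim r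

/-- The pseudofinite monadic second order theory of linear order: the set of `L_MSOFin`-sentences
true in `MSO(n)` for every `n`. -/
def TMSOFin : LMSOFin.Theory := {φ : LMSOFin.Sentence | ∀ n : ℕ, Set (Fin n) ⊨ φ}

/-! ### Abstract `L_MO`-structures: atoms and interval restrictions -/

section LMOAbstract

variable {M : Type*} [LMO.Structure M]

/-- The interpretation of `⊆` in an `L_MO`-structure. -/
def mSub (a b : M) : Prop := RelMap (L := LMO) MORel.sub ![a, b]

/-- The interpretation of `∃<` in an `L_MO`-structure. -/
def mLt (a b : M) : Prop := RelMap (L := LMO) MORel.elt ![a, b]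

/-- `b` is the least element of the partial order `(M, ⊆)`. -/
def IsBotM (b : M) : Prop := ∀ x : M, mSub b x

/-- `a` is an atom of `(M, ⊆)`: a minimal element strictly above the least element. -/
def IsAtomM (a : M) : Prop :=
  ∃ b : M, IsBotM b ∧ a ≠ b ∧ ∀ x : M, mSub x a → x = a ∨ x = b

/-- The carrier `{B : M ∣ every atom X ⊆ B satisfies (i ∃< X ∨ X = i) ∧ X ∃< j}`
of the restriction `M ↾ [i,j)`. -/
def intervalRes (i j : M) : Set M :=
  {B : M | ∀ X : M, IsAtomM X → mSub X B → (mLt i X ∨ X = i) ∧ mLt X j}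

/-- The `L_MO`-structure induced on a subset of an `L_MO`-structure. -/
def inducedLMO (s : Set M) : LMO.Structure s where
  funMap {n} f := Empty.elim f
  RelMap {n} r v := RelMap (M := M) r fun k => (v k : M)

end LMOAbstract

/-! ### Abstract `L_WSO`-structures, restrictions to elements -/

section LWSOAbstract

variable {M : Type*} [LWSO.Structure M]

/-- The interpretation of `∪` in an `L_WSO`-structure. -/
def wUnion (a b : M) : M := funMap (L := LWSO) WSOFunc.union ![a, b]

/-- The interpretation of `∩` in an `L_WSO`-structure. -/
def wInter (a b : M) : M := funMap (L := LWSO) WSOFunc.inter ![a, b]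

/-- The interpretation of `⊥` in an `L_WSO`-structure. -/
def wBot : M := funMap (L := LWSO) (M := M) WSOFunc.bot ![]

/-- The interpretation of `𝟎` in an `L_WSO`-structure. -/
def wZero : M := funMap (L := LWSO) (M := M) WSOFunc.zero ![]

/-- The interpretation of `min` in an `L_WSO`-structure. -/
def wMin (a : M) : M := funMap (L := LWSO) WSOFunc.min ![a]

/-- The interpretation of `max` in an `L_WSO`-structure. -/
def wMax (a : M) : M := funMap (L := LWSO) WSOFunc.max ![a]

/-- The interpretation of `𝔰⁻¹` in an `L_WSO`-structure. -/
def wSInv (a b : M) : M := funMap (L := LWSO) WSOFunc.sinv ![a, b]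

variable (M)

/-- The universe `{B : M ∣ B ∩ A = B}` of the restriction `M ↾ A`. -/
def Res (A : M) : Type _ := {B : M // wInter B A = B}

/-- The (true in every model of `Th(WSO(𝕀))`) closure conditions saying that
`{B : M ∣ B ∩ A = B}` is closed under the operations of the restricted structure `M ↾ A`. -/
structure ResClosed (A : M) : Prop where
  union : ∀ B C : M, wInter B A = B → wInter C A = C → wInter (wUnion B C) A = wUnion B C
  inter : ∀ B C : M, wInter B A = B → wInter C A = C → wInter (wInter B C) A = wInter B C
  bot : wInter (wBot : M) A = wBot
  zero : wInter (wMin A) A = wMin A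
  zeroStar : wInter (wMax A) A = wMax A
  sinv : ∀ B : M, wInter B A = B → wInter (wSInv A B) A = wSInv A B

variable {M}

/-- The restriction `M ↾ A` as an `L_MSOFin`-structure: `∪`, `∩`, `⊥` are inherited from `M`,
`𝟎` is `min(A)`, `𝟎*` is `max(A)`, and `s⁻¹` is `B ↦ 𝔰⁻¹(A, B)` computed in `M`. -/
def resStructure {A : M} (hc : ResClosed M A) : LMSOFin.Structure (Res M A) where
  funMap {m} f :=
    match f with
    | .union => fun v => ⟨wUnion (v 0).1 (v 1).1, hc.union _ _ (v 0).2 (v 1).2⟩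
    | .inter => fun v => ⟨wInter (v 0).1 (v 1).1, hc.inter _ _ (v 0).2 (v 1).2⟩
    | .bot => fun _ => ⟨wBot, hc.bot⟩
    | .zero => fun _ => ⟨wMin A, hc.zero⟩
    | .zeroStar => fun _ => ⟨wMax A, hc.zeroStar⟩
    | .sinv => fun v => ⟨wSInv A (v 0).1, hc.sinv _ (v 0).2⟩
  RelMap {m} r := Empty.elim r

/-- `⌊Ā⌋ = 𝟎 ∪ A₁ ∪ … ∪ Aₙ`, computed in `M`. -/
def wFloor {n : ℕ} (A : Fin n → M) : M := (List.ofFn A).foldl wUnion wZero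

end LWSOAbstract

/-! ### Complexity classes of formulas -/

section Complexity

variable {L : Language} {α : Type*}

/-- Positive existential formulas: those built from atomic formulas using only `∧`, `∨`
and `∃`. -/
inductive IsPosEx : {n : ℕ} → L.BoundedFormula α n → Prop
  | equal {n} (t₁ t₂ : L.Term (α ⊕ Fin n)) : IsPosEx (BoundedFormula.equal t₁ t₂)
  | rel {n k} (R : L.Relations k) (ts : Fin k → L.Term (α ⊕ Fin n)) :
      IsPosEx (BoundedFormula.rel R ts)
  | inf {n} {φ ψ : L.BoundedFormula α n} : IsPosEx φ → IsPosEx ψ → IsPosEx (φ ⊓ ψ)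
  | sup {n} {φ ψ : L.BoundedFormula α n} : IsPosEx φ → IsPosEx ψ → IsPosEx (φ ⊔ ψ)
  | ex {n} {φ : L.BoundedFormula α (n + 1)} : IsPosEx φ → IsPosEx φ.ex

/-- Existential formulas: a block of existential quantifiers applied to a
quantifier-free formula. -/
inductive IsExist : {n : ℕ} → L.BoundedFormula α n → Prop
  | of_isQF {n} {φ : L.BoundedFormula α n} : φ.IsQF → IsExist φ
  | ex {n} {φ : L.BoundedFormula α (n + 1)} : IsExist φ → IsExist φ.ex

end Complexity

/-! ### Finite unions of closed intervals and the structure `L(𝕀)` -/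

/-- `A` is a finite union of closed intervals of `𝕀` (each of the form `[i,j]` or `[i,∞)`;
intervals of the form `(-∞, j]` coincide with `[0, j]` since `𝕀` has least element `0`). -/
def IsFCI (A : Set II) : Prop :=
  ∃ (k : ℕ) (f : Fin k → Set II),
    (∀ m : Fin k, (∃ i j : II, f m = Set.Icc i j) ∨ ∃ i : II, f m = Set.Ici i) ∧ A = ⋃ m, f m

/-- The universe of `L(𝕀)`: finite unions of closed intervals of `𝕀`. -/
abbrev FCI : Type := {A : Set II // IsFCI A}

/-- The set of left endpoints of `A`. -/
def lSet (A : Set II) : Set II := {i ∈ A | i = 0 ∨ ∃ i' < i, Set.Ioo i' i ∩ A = ∅}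

/-- The set of right endpoints of `A`. -/
def rSet (A : Set II) : Set II := {i ∈ A | ∃ i'', i < i'' ∧ Set.Ioo i i'' ∩ A = ∅}

lemma isFCI_empty : IsFCI (∅ : Set II) := ⟨0, Fin.elim0, fun m => m.elim0, by simp⟩

lemma isFCI_singleton (i : II) : IsFCI {i} :=
  ⟨1, fun _ => Set.Icc i i, fun _ => Or.inl ⟨i, i, rfl⟩, by simp⟩

lemma IsFCI.union {A B : Set II} (hA : IsFCI A) (hB : IsFCI B) : IsFCI (A ∪ B) := by
  obtain ⟨k, f, hf, rfl⟩ := hA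
  obtain ⟨l, g, hg, rfl⟩ := hB
  refine ⟨k + l, fun m => Sum.elim f g (finSumFinEquiv.symm m), fun m => ?_, ?_⟩
  · dsimp only
    rcases finSumFinEquiv.symm m with i | j
    · exact hf i
    · exact hg j
  · ext x
    simp only [Set.mem_union, Set.mem_iUnion]
    constructor
    · rintro (⟨i, hi⟩ | ⟨j, hj⟩)
      · exact ⟨finSumFinEquiv (Sum.inl i), by simpa using hi⟩
      · exact ⟨finSumFinEquiv (Sum.inr j), by simpa using hj⟩
    · rintro ⟨m, hm⟩
      rcases h : finSumFinEquiv.symm m with i | j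
      · rw [h] at hm; exact Or.inl ⟨i, hm⟩
      · rw [h] at hm; exact Or.inr ⟨j, hm⟩

lemma Icc_inter_Ici' {a b c : II} : Set.Icc a b ∩ Set.Ici c = Set.Icc (a ⊔ c) b := by
  ext x
  simp only [Set.mem_inter_iff, Set.mem_Icc, Set.mem_Ici, sup_le_iff]
  tauto

lemma IsFCI.inter {A B : Set II} (hA : IsFCI A) (hB : IsFCI B) : IsFCI (A ∩ B) := by
  obtain ⟨k, f, hf, rfl⟩ := hA
  obtain ⟨l, g, hg, rfl⟩ := hB
  refine ⟨k * l, fun m => f (finProdFinEquiv.symm m).1 ∩ g (finProdFinEquiv.symm m).2,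
    fun m => ?_, ?_⟩
  · dsimp only
    rcases hf (finProdFinEquiv.symm m).1 with ⟨a, b, hab⟩ | ⟨a, ha⟩ <;>
      rcases hg (finProdFinEquiv.symm m).2 with ⟨c, d, hcd⟩ | ⟨c, hc⟩
    · exact Or.inl ⟨a ⊔ c, b ⊓ d, by rw [hab, hcd, Set.Icc_inter_Icc]⟩
    · exact Or.inl ⟨a ⊔ c, b, by rw [hab, hc, Icc_inter_Ici']⟩
    · exact Or.inl ⟨c ⊔ a, d, by rw [ha, hcd, Set.inter_comm, Icc_inter_Ici']⟩
    · exact Or.inr ⟨a ⊔ c, by rw [ha, hc, Set.Ici_inter_Ici]⟩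
  · ext x
    simp only [Set.mem_inter_iff, Set.mem_iUnion]
    constructor
    · rintro ⟨⟨i, hi⟩, ⟨j, hj⟩⟩
      exact ⟨finProdFinEquiv (i, j), by simpa using ⟨hi, hj⟩⟩
    · rintro ⟨m, hm⟩
      exact ⟨⟨_, hm.1⟩, ⟨_, hm.2⟩⟩

lemma isFCI_minSet (A : Set II) : IsFCI (minSet A) := by
  rcases (minSet_subsingleton A).eq_empty_or_singleton with h | ⟨i, h⟩
  · rw [h]; exact isFCI_empty
  · rw [h]; exact isFCI_singleton i

lemma isFCI_maxSet (A : Set II) : IsFCI (maxSet A) := by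
  rcases (maxSet_subsingleton A).eq_empty_or_singleton with h | ⟨i, h⟩
  · rw [h]; exact isFCI_empty
  · rw [h]; exact isFCI_singleton i

lemma finite_isFCI {A : Set II} (hA : A.Finite) : IsFCI A :=
  Set.Finite.induction_on (motive := fun s _ => IsFCI s) A hA isFCI_empty
    (fun _ _ ih => by rw [Set.insert_eq]; exact (isFCI_singleton _).union ih)

lemma IsFCI.lSet_finite {A : Set II} (hA : IsFCI A) : (lSet A).Finite := by
  obtain ⟨k, f, hf, rfl⟩ := hA
  have hsub : lSet (⋃ m, f m) ⊆ {0} ∪ ⋃ m, minSet (f m) := by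
    rintro i ⟨hiA, hi⟩
    rcases hi with rfl | ⟨i', hi'lt, hgap⟩
    · exact Set.mem_union_left _ rfl
    · obtain ⟨m, him⟩ := Set.mem_iUnion.1 hiA
      refine Set.mem_union_right _ (Set.mem_iUnion.2 ⟨m, him, fun j hj => ?_⟩)
      by_contra hji
      push_neg at hji
      obtain ⟨x, hx1, hx2⟩ := exists_between (max_lt hi'lt hji : max i' j < i)
      have hxfm : x ∈ f m := by
        rcases hf m with ⟨a, b, hab⟩ | ⟨a, ha⟩
        · rw [hab] at him hj ⊢
          exact ⟨hj.1.trans ((le_max_right i' j).trans hx1.le), hx2.le.trans him.2⟩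
        · rw [ha] at hj ⊢
          exact hj.trans ((le_max_right i' j).trans hx1.le)
      have hmem : x ∈ Set.Ioo i' i ∩ ⋃ m, f m :=
        ⟨⟨(le_max_left i' j).trans_lt hx1, hx2⟩, Set.mem_iUnion.2 ⟨m, hxfm⟩⟩
      rw [hgap] at hmem
      exact hmem
  exact ((Set.finite_singleton 0).union
    (Set.finite_iUnion fun m => (minSet_subsingleton (f m)).finite)).subset hsub

lemma IsFCI.rSet_finite {A : Set II} (hA : IsFCI A) : (rSet A).Finite := by
  obtain ⟨k, f, hf, rfl⟩ := hA
  have hsub : rSet (⋃ m, f m) ⊆ ⋃ m, maxSet (f m) := by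
    rintro i ⟨hiA, i'', hi''gt, hgap⟩
    obtain ⟨m, him⟩ := Set.mem_iUnion.1 hiA
    refine Set.mem_iUnion.2 ⟨m, him, fun j hj => ?_⟩
    by_contra hij
    push_neg at hij
    obtain ⟨x, hx1, hx2⟩ := exists_between (lt_min hi''gt hij : i < min i'' j)
    have hxfm : x ∈ f m := by
      rcases hf m with ⟨a, b, hab⟩ | ⟨a, ha⟩
      · rw [hab] at him hj ⊢
        exact ⟨him.1.trans hx1.le, (hx2.le.trans (min_le_right i'' j)).trans hj.2⟩
      · rw [ha] at him ⊢
        exact him.trans hx1.le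
    have hmem : x ∈ Set.Ioo i i'' ∩ ⋃ m, f m :=
      ⟨⟨hx1, hx2.trans_le (min_le_left i'' j)⟩, Set.mem_iUnion.2 ⟨m, hxfm⟩⟩
    rw [hgap] at hmem
    exact hmem
  exact (Set.finite_iUnion fun m => (maxSet_subsingleton (f m)).finite).subset hsub

/-- `L(𝕀)` as an `L_L`-structure. -/
instance fciLL : LL.Structure FCI where
  funMap {m} f :=
    match f with
    | .union => fun v => ⟨(v 0).1 ∪ (v 1).1, (v 0).2.union (v 1).2⟩
    | .inter => fun v => ⟨(v 0).1 ∩ (v 1).1, (v 0).2.inter (v 1).2⟩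
    | .bot => fun _ => ⟨∅, isFCI_empty⟩
    | .zero => fun _ => ⟨{0}, isFCI_singleton 0⟩
    | .min => fun v => ⟨minSet (v 0).1, isFCI_minSet _⟩
    | .max => fun v => ⟨maxSet (v 0).1, isFCI_maxSet _⟩
    | .left => fun v => ⟨lSet (v 0).1, finite_isFCI (v 0).2.lSet_finite⟩
    | .right => fun v => ⟨rSet (v 0).1, finite_isFCI (v 0).2.rSet_finite⟩
  RelMap {m} r := Empty.elim r

/-!
A finite union `A` of closed intervals is determined by its endpoints: `x ∈ A` iff some left
endpoint `a ≤ x` has no right endpoint in `[a, x)`. For `x ∈ A`, the left endpoint is the least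
`a` with `[a, x] ⊆ A`; it exists, and `A` misses a left neighbourhood of it, because `A` is a
union of finitely many closed pieces, each with a least element. Dually, for `a ∈ A` and `x ∉ A`
the greatest `b` with `[a, b] ⊆ A` is a right endpoint below `x`. The criterion quantifies only
over points, which are the singletons of `WSO(𝕀)` (`min X = X ≠ ⊥`), ordered by
`max ({a} ∪ {b}) = {b}`, so it is an `L_WSO`-formula.
-/

section FiniteUnion

open Filter Topology

variable {α ι : Type*} [LinearOrder α] {f : ι → Set α}

lemma Icc_subset_of_isLeast {s t : Set α} (ht : t.OrdConnected) {c i x : α}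
    (hc : IsLeast t c) (hi : i ∈ t) (hts : t ⊆ s) (hix : Icc i x ⊆ s) : Icc c x ⊆ s :=
  Icc_subset_Icc_union_Icc.trans (union_subset ((ht.out hc.1 hi).trans hts) hix)

lemma Icc_subset_of_isGreatest {s t : Set α} (ht : t.OrdConnected) {a j d : α}
    (hd : IsGreatest t d) (hj : j ∈ t) (hts : t ⊆ s) (haj : Icc a j ⊆ s) : Icc a d ⊆ s :=
  Icc_subset_Icc_union_Icc.trans (union_subset haj ((ht.out hj hd.1).trans hts))

lemma _root_.Set.OrdConnected.bddAbove_of_notMem {t : Set α} (ht : t.OrdConnected) {j x : α}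
    (hj : j ∈ t) (hjx : j ≤ x) (hx : x ∉ t) : BddAbove t :=
  ⟨x, fun _ hz => not_lt.1 fun hxz => hx (ht.out hj hz ⟨hjx, hxz.le⟩)⟩

lemma exists_isLeast_Icc_subset_iUnion [Finite ι] (hconn : ∀ m, (f m).OrdConnected)
    (hleast : ∀ m, (f m).Nonempty → ∃ c, IsLeast (f m) c) {x : α} (hx : x ∈ ⋃ m, f m) :
    ∃ a, IsLeast {i | i ≤ x ∧ Icc i x ⊆ ⋃ m, f m} a := by
  set S := {i | i ≤ x ∧ Icc i x ⊆ ⋃ m, f m}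
  have key : ∀ i ∈ S, ∃ c ∈ S ∩ ⋃ m, {c | IsLeast (f m) c}, c ≤ i := by
    rintro i ⟨hix, hiS⟩
    obtain ⟨m, him⟩ := mem_iUnion.1 (hiS ⟨le_rfl, hix⟩)
    obtain ⟨c, hc⟩ := hleast m ⟨i, him⟩
    exact ⟨c, ⟨⟨(hc.2 him).trans hix,
      Icc_subset_of_isLeast (hconn m) hc him (subset_iUnion f m) hiS⟩,
      mem_iUnion.2 ⟨m, hc⟩⟩, hc.2 him⟩
  have hfin : (S ∩ ⋃ m, {c | IsLeast (f m) c}).Finite :=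
    (finite_iUnion fun m => Subsingleton.finite fun _ h _ h' => h.unique h').inter_of_right _
  obtain ⟨c, hcS, -⟩ := key x ⟨le_rfl, fun y hy => le_antisymm hy.2 hy.1 ▸ hx⟩
  obtain ⟨a, haS, hmin⟩ := exists_min_image _ id hfin ⟨c, hcS⟩
  exact ⟨a, haS.1, fun i hi => by
    obtain ⟨c, hcS, hci⟩ := key i hi
    exact (hmin c hcS).trans hci⟩

lemma exists_isGreatest_Icc_subset_iUnion [Finite ι] (hconn : ∀ m, (f m).OrdConnected)
    (hgreatest : ∀ m, (f m).Nonempty → BddAbove (f m) → ∃ d, IsGreatest (f m) d) {a x : α}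
    (ha : a ∈ ⋃ m, f m) (hax : a ≤ x) (hx : x ∉ ⋃ m, f m) :
    ∃ b, IsGreatest {j | a ≤ j ∧ Icc a j ⊆ ⋃ m, f m} b := by
  set T := {j | a ≤ j ∧ Icc a j ⊆ ⋃ m, f m}
  have key : ∀ j ∈ T, ∃ d ∈ T ∩ ⋃ m, {d | IsGreatest (f m) d}, j ≤ d := by
    rintro j ⟨haj, hjT⟩
    have hjx : j ≤ x := not_lt.1 fun hxj => hx (hjT ⟨hax, hxj.le⟩)
    obtain ⟨m, hjm⟩ := mem_iUnion.1 (hjT ⟨haj, le_rfl⟩)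
    obtain ⟨d, hd⟩ := hgreatest m ⟨j, hjm⟩
      ((hconn m).bddAbove_of_notMem hjm hjx fun hxm => hx (mem_iUnion.2 ⟨m, hxm⟩))
    exact ⟨d, ⟨⟨haj.trans (hd.2 hjm),
      Icc_subset_of_isGreatest (hconn m) hd hjm (subset_iUnion f m) hjT⟩,
      mem_iUnion.2 ⟨m, hd⟩⟩, hd.2 hjm⟩
  have hfin : (T ∩ ⋃ m, {d | IsGreatest (f m) d}).Finite :=
    (finite_iUnion fun m => Subsingleton.finite fun _ h _ h' => h.unique h').inter_of_right _
  obtain ⟨d, hdT, -⟩ := key a ⟨le_rfl, fun y hy => le_antisymm hy.2 hy.1 ▸ ha⟩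
  obtain ⟨b, hbT, hmax⟩ := exists_max_image _ id hfin ⟨d, hdT⟩
  exact ⟨b, hbT.1, fun j hj => by
    obtain ⟨d, hdT, hjd⟩ := key j hj
    exact hjd.trans (hmax d hdT)⟩

variable [TopologicalSpace α]

lemma compl_iUnion_mem_nhdsLT [Finite ι] (hclosed : ∀ m, IsClosed (f m))
    (hconn : ∀ m, (f m).OrdConnected) (hleast : ∀ m, (f m).Nonempty → ∃ c, IsLeast (f m) c)
    {x a : α} (ha : IsLeast {i | i ≤ x ∧ Icc i x ⊆ ⋃ m, f m} a) : (⋃ m, f m)ᶜ ∈ 𝓝[<] a := by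
  rw [compl_iUnion, iInter_mem]
  intro m
  by_cases ham : a ∈ f m
  · obtain ⟨c, hc⟩ := hleast m ⟨a, ham⟩
    have hac : a ≤ c := ha.2 ⟨(hc.2 ham).trans ha.1.1,
      Icc_subset_of_isLeast (hconn m) hc ham (subset_iUnion f m) ha.1.2⟩
    exact mem_of_superset self_mem_nhdsWithin fun y hy hym =>
      (not_lt.2 (hac.trans (hc.2 hym))) hy
  · exact mem_nhdsWithin_of_mem_nhds ((hclosed m).isOpen_compl.mem_nhds ham)

lemma compl_iUnion_mem_nhdsGT [Finite ι] (hclosed : ∀ m, IsClosed (f m))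
    (hconn : ∀ m, (f m).OrdConnected)
    (hgreatest : ∀ m, (f m).Nonempty → BddAbove (f m) → ∃ d, IsGreatest (f m) d) {a x b : α}
    (hx : x ∉ ⋃ m, f m) (hb : IsGreatest {j | a ≤ j ∧ Icc a j ⊆ ⋃ m, f m} b) (hbx : b ≤ x) :
    (⋃ m, f m)ᶜ ∈ 𝓝[>] b := by
  rw [compl_iUnion, iInter_mem]
  intro m
  by_cases hbm : b ∈ f m
  · obtain ⟨d, hd⟩ := hgreatest m ⟨b, hbm⟩
      ((hconn m).bddAbove_of_notMem hbm hbx fun hxm => hx (mem_iUnion.2 ⟨m, hxm⟩))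
    have hdb : d ≤ b := hb.2 ⟨hb.1.1.trans (hd.2 hbm),
      Icc_subset_of_isGreatest (hconn m) hd hbm (subset_iUnion f m) hb.1.2⟩
    exact mem_of_superset self_mem_nhdsWithin fun y hy hym =>
      (not_lt.2 ((hd.2 hym).trans hdb)) hy
  · exact mem_nhdsWithin_of_mem_nhds ((hclosed m).isOpen_compl.mem_nhds hbm)

end FiniteUnion

section Endpoints

open Filter Topology

def IsClosedInterval (I : Set II) : Prop := (∃ i j, I = Icc i j) ∨ ∃ i, I = Ici i

namespace IsClosedInterval

variable {I : Set II}

lemma isClosed (hI : IsClosedInterval I) : IsClosed I := by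
  rcases hI with ⟨i, j, rfl⟩ | ⟨i, rfl⟩
  exacts [isClosed_Icc, isClosed_Ici]

lemma ordConnected (hI : IsClosedInterval I) : I.OrdConnected := by
  rcases hI with ⟨i, j, rfl⟩ | ⟨i, rfl⟩ <;> infer_instance

lemma exists_isLeast (hI : IsClosedInterval I) (hne : I.Nonempty) : ∃ c, IsLeast I c := by
  rcases hI with ⟨i, j, rfl⟩ | ⟨i, rfl⟩
  exacts [⟨i, isLeast_Icc (nonempty_Icc.1 hne)⟩, ⟨i, isLeast_Ici⟩]

lemma exists_isGreatest (hI : IsClosedInterval I) (hne : I.Nonempty) (hbdd : BddAbove I) :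
    ∃ d, IsGreatest I d := by
  rcases hI with ⟨i, j, rfl⟩ | ⟨i, rfl⟩
  exacts [⟨j, isGreatest_Icc (nonempty_Icc.1 hne)⟩, (not_bddAbove_Ici i hbdd).elim]

end IsClosedInterval

variable {A : Set II}

lemma mem_lSet_of_compl_mem_nhdsLT {a : II} (ha : a ∈ A) (h : Aᶜ ∈ 𝓝[<] a) : a ∈ lSet A := by
  refine ⟨ha, (eq_zero_or_pos a).imp id fun ha₀ => ?_⟩
  obtain ⟨i, hi, hsub⟩ := (mem_nhdsLT_iff_exists_Ioo_subset' ha₀).1 h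
  exact ⟨i, hi, (subset_compl_iff_disjoint_right.1 hsub).inter_eq⟩

lemma mem_rSet_of_compl_mem_nhdsGT {b : II} (hb : b ∈ A) (h : Aᶜ ∈ 𝓝[>] b) : b ∈ rSet A := by
  obtain ⟨i, hi, hsub⟩ := mem_nhdsGT_iff_exists_Ioo_subset.1 h
  exact ⟨hb, i, hi, (subset_compl_iff_disjoint_right.1 hsub).inter_eq⟩

lemma not_Icc_subset_of_mem_rSet {b x : II} (hb : b ∈ rSet A) (hbx : b < x) : ¬Icc b x ⊆ A := by
  obtain ⟨-, i, hbi, hgap⟩ := hb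
  obtain ⟨y, hby, hy⟩ := exists_between (lt_min hbi hbx)
  intro hsub
  exact hgap.subset ⟨⟨hby, hy.trans_le (min_le_left _ _)⟩,
    hsub ⟨hby.le, (hy.trans_le (min_le_right _ _)).le⟩⟩

lemma IsFCI.exists_mem_lSet (hA : IsFCI A) {x : II} (hx : x ∈ A) :
    ∃ a ∈ lSet A, a ≤ x ∧ Icc a x ⊆ A := by
  obtain ⟨k, f, hf, rfl⟩ : ∃ (k : ℕ) (f : Fin k → Set II), (∀ m, IsClosedInterval (f m)) ∧
    A = ⋃ m, f m := hA
  have hconn m := (hf m).ordConnected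
  have hleast m := (hf m).exists_isLeast
  obtain ⟨a, ha⟩ := exists_isLeast_Icc_subset_iUnion hconn hleast hx
  exact ⟨a, mem_lSet_of_compl_mem_nhdsLT (ha.1.2 ⟨le_rfl, ha.1.1⟩)
    (compl_iUnion_mem_nhdsLT (fun m => (hf m).isClosed) hconn hleast ha), ha.1⟩

lemma IsFCI.exists_mem_rSet (hA : IsFCI A) {a x : II} (ha : a ∈ A) (hax : a ≤ x) (hx : x ∉ A) :
    ∃ b ∈ rSet A, a ≤ b ∧ b < x := by
  obtain ⟨k, f, hf, rfl⟩ : ∃ (k : ℕ) (f : Fin k → Set II), (∀ m, IsClosedInterval (f m)) ∧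
    A = ⋃ m, f m := hA
  have hconn m := (hf m).ordConnected
  have hgreatest m := (hf m).exists_isGreatest
  obtain ⟨b, hb⟩ := exists_isGreatest_Icc_subset_iUnion hconn hgreatest ha hax hx
  have hbx : b < x := not_le.1 fun hxb => hx (hb.1.2 ⟨hax, hxb⟩)
  exact ⟨b, mem_rSet_of_compl_mem_nhdsGT (hb.1.2 ⟨hb.1.1, le_rfl⟩)
    (compl_iUnion_mem_nhdsGT (fun m => (hf m).isClosed) hconn hgreatest hx hb hbx.le),
    hb.1.1, hbx⟩

def ofEndpoints (L R : Set II) : Set II := {x | ∃ a ∈ L, a ≤ x ∧ ∀ b ∈ R, a ≤ b → x ≤ b}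

theorem IsFCI.ofEndpoints_lSet_rSet (hA : IsFCI A) : ofEndpoints (lSet A) (rSet A) = A := by
  ext x
  constructor
  · rintro ⟨a, ha, hax, hR⟩
    by_contra hx
    obtain ⟨b, hb, hab, hbx⟩ := hA.exists_mem_rSet ha.1 hax hx
    exact (hR b hb hab).not_gt hbx
  · intro hx
    obtain ⟨a, ha, hax, hsub⟩ := hA.exists_mem_lSet hx
    exact ⟨a, ha, hax, fun b hb hab => not_lt.1 fun hbx =>
      not_Icc_subset_of_mem_rSet hb hbx ((Icc_subset_Icc_left hab).trans hsub)⟩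

end Endpoints

section Formula

open BoundedFormula

variable {α : Type*} [LinearOrder α]

lemma minSet_eq_self_iff {s : Set α} : minSet s = s ↔ s.Subsingleton :=
  ⟨fun h => h ▸ minSet_subsingleton s,
    fun h => (minSet_subset s).antisymm fun _ hi => ⟨hi, fun _ hj => (h hi hj).le⟩⟩

lemma maxSet_pair_eq_singleton_iff {i j : α} : maxSet ({j, i} : Set α) = {j} ↔ i ≤ j := by
  refine ⟨fun h => (h.symm ▸ mem_singleton j : j ∈ maxSet {j, i}).2 i (by simp), fun hij => ?_⟩
  ext k
  simp only [maxSet, mem_insert_iff, mem_singleton_iff, forall_eq_or_imp, forall_eq]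
  grind

def single (i : II) : FinSub := ⟨{i}, finite_singleton i⟩

variable {β : Type*}

def unionT (t s : LWSO.Term β) : LWSO.Term β := Term.func WSOFunc.union ![t, s]
def interT (t s : LWSO.Term β) : LWSO.Term β := Term.func WSOFunc.inter ![t, s]
def minT (t : LWSO.Term β) : LWSO.Term β := Term.func WSOFunc.min ![t]
def maxT (t : LWSO.Term β) : LWSO.Term β := Term.func WSOFunc.max ![t]
def botT : LWSO.Term β := Term.func WSOFunc.bot ![]

section Realize

variable (t s : LWSO.Term β) (w : β → FinSub)

lemma realize_unionT : ((unionT t s).realize w).1 = (t.realize w).1 ∪ (s.realize w).1 :=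
  rfl
lemma realize_interT : ((interT t s).realize w).1 = (t.realize w).1 ∩ (s.realize w).1 :=
  rfl
lemma realize_minT : ((minT t).realize w).1 = minSet (t.realize w).1 := rfl
lemma realize_maxT : ((maxT t).realize w).1 = maxSet (t.realize w).1 := rfl
lemma realize_botT : ((botT : LWSO.Term β).realize w).1 = ∅ := rfl

end Realize

variable {n : ℕ}

def singletonF (t : LWSO.Term (β ⊕ Fin n)) : LWSO.BoundedFormula β n :=
  (minT t).bdEqual t ⊓ ∼(t.bdEqual botT)

def subsetF (t s : LWSO.Term (β ⊕ Fin n)) : LWSO.BoundedFormula β n :=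
  (interT t s).bdEqual t

/-- `t ≤ s` when `t` and `s` denote singletons. -/
def leF (t s : LWSO.Term (β ⊕ Fin n)) : LWSO.BoundedFormula β n :=
  (maxT (unionT t s)).bdEqual s

def exSingleton (φ : LWSO.BoundedFormula β (n + 1)) : LWSO.BoundedFormula β n :=
  ∃' (singletonF (Term.var (Sum.inr (Fin.last n))) ⊓ φ)

def allSingleton (φ : LWSO.BoundedFormula β (n + 1)) : LWSO.BoundedFormula β n :=
  ∀' (singletonF (Term.var (Sum.inr (Fin.last n))) ⟹ φ)

variable {v : β → FinSub} {xs : Fin n → FinSub}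

lemma realize_subsetF {t s : LWSO.Term (β ⊕ Fin n)} :
    (subsetF t s).Realize v xs ↔
      (t.realize (Sum.elim v xs)).1 ⊆ (s.realize (Sum.elim v xs)).1 := by
  rw [subsetF, realize_bdEqual, Subtype.ext_iff, realize_interT, inter_eq_left]

lemma realize_leF {t s : LWSO.Term (β ⊕ Fin n)} :
    (leF t s).Realize v xs ↔
      maxSet ((t.realize (Sum.elim v xs)).1 ∪ (s.realize (Sum.elim v xs)).1) =
        (s.realize (Sum.elim v xs)).1 := by
  rw [leF, realize_bdEqual, Subtype.ext_iff, realize_maxT, realize_unionT]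

lemma exists_single_eq_iff {X : FinSub} :
    (∃ i, single i = X) ↔ X.1.Subsingleton ∧ X.1.Nonempty := by
  simp only [Subtype.ext_iff, single, eq_comm (a := ({_} : Set II)),
    exists_eq_singleton_iff_nonempty_subsingleton, and_comm]

lemma realize_singletonF_last {X : FinSub} :
    (singletonF (Term.var (Sum.inr (Fin.last n)))).Realize v (Fin.snoc xs X) ↔
      ∃ i, single i = X := by
  rw [exists_single_eq_iff]
  simp only [singletonF, realize_inf, realize_not, realize_bdEqual, Subtype.ext_iff,
    realize_minT, realize_botT, Term.realize_var, Sum.elim_inr, Fin.snoc_last,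
    minSet_eq_self_iff, ← nonempty_iff_ne_empty]

lemma realize_exSingleton {φ : LWSO.BoundedFormula β (n + 1)} :
    (exSingleton φ).Realize v xs ↔ ∃ i, φ.Realize v (Fin.snoc xs (single i)) := by
  simp only [exSingleton, realize_ex, realize_inf, realize_singletonF_last, exists_exists_eq_and]

lemma realize_allSingleton {φ : LWSO.BoundedFormula β (n + 1)} :
    (allSingleton φ).Realize v xs ↔ ∀ i, φ.Realize v (Fin.snoc xs (single i)) := by
  simp only [allSingleton, realize_all, realize_imp, realize_singletonF_last, forall_exists_index,
    forall_apply_eq_imp_iff]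

def memOfEndpointsF (L R : Fin 4) : LWSO.BoundedFormula (Fin 4) 1 :=
  exSingleton (subsetF &1 (Term.var (Sum.inl L)) ⊓ leF &1 &0 ⊓
    allSingleton (subsetF &2 (Term.var (Sum.inl R)) ⟹ leF &1 &2 ⟹ leF &0 &2))

lemma realize_memOfEndpointsF (L R : Fin 4) (v : Fin 4 → FinSub) (xs : Fin 0 → FinSub)
    (x : II) :
    (memOfEndpointsF L R).Realize v (Fin.snoc xs (single x)) ↔
      x ∈ ofEndpoints (v L).1 (v R).1 := by
  simp only [memOfEndpointsF, realize_exSingleton, realize_allSingleton, realize_inf, realize_imp,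
    realize_subsetF, realize_leF, Term.realize_var, Sum.elim_inl]
  simp [Fin.snoc, single, ofEndpoints, maxSet_pair_eq_singleton_iff, and_assoc]

end Formula

def subsetFormula : LWSO.Formula (Fin 4) :=
  allSingleton (memOfEndpointsF 0 1 ⟹ memOfEndpointsF 2 3)

lemma realize_subsetFormula (v : Fin 4 → FinSub) :
    subsetFormula.Realize v ↔ ofEndpoints (v 0).1 (v 1).1 ⊆ ofEndpoints (v 2).1 (v 3).1 := by
  simp only [subsetFormula, Formula.Realize, realize_allSingleton, BoundedFormula.realize_imp,
    realize_memOfEndpointsF]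
  rfl

/-- There exists an `L_WSO`-formula `φ_⊆(X_l, X_r, Y_l, Y_r)` such that for
all `A, B ∈ P_fci(𝕀)`: `A ⊆ B` iff `WSO(𝕀) ⊨ φ_⊆(l(A), r(A), l(B), r(B))`. -/
theorem subset_definable_from_endpoints :
    ∃ φ : LWSO.Formula (Fin 4),
      ∀ (A B : Set II), IsFCI A → IsFCI B →
        ∀ (hlA : (lSet A).Finite) (hrA : (rSet A).Finite)
          (hlB : (lSet B).Finite) (hrB : (rSet B).Finite),
          (A ⊆ B ↔
            φ.Realize (![⟨lSet A, hlA⟩, ⟨rSet A, hrA⟩, ⟨lSet B, hlB⟩, ⟨rSet B, hrB⟩] : Fin 4 → FinSub)) := by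
  refine ⟨subsetFormula, fun A B hA hB _ _ _ _ => ?_⟩
  rw [realize_subsetFormula]
  change A ⊆ B ↔ ofEndpoints (lSet A) (rSet A) ⊆ ofEndpoints (lSet B) (rSet B)
  rw [hA.ofEndpoints_lSet_rSet, hB.ofEndpoints_lSet_rSet]

end MCpaper
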